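/- Let V be a real vector space of finite dimension n ≥ 3 with nondegenerate symmetric bilinear form g, let P ∈ V satisfy g(P,P) = −1, let π(X) = g(X,P), let Ric be a symmetric bilinear form on V with Ric(P,X) = (n−1)·π(X) for all X ∈ V, and let r = tr_g(Ric). If Ric = a·g + b·(π⊗π) for real scalars a and b, then Ric = (r/(n−1) − 1)·g + (r/(n−1) − n)·(π⊗π). -/

import Mathlib

/-!
Taking the `g`-trace of `Ric = a g + b π⊗π` gives `r = n a - b`, since `tr_g g = n` and
`tr_g (π⊗π) = g(P,P) = -1`; evaluating it at `(P,P)` gives `b - a = -(n-1)`. Solving this linear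
system gives `a = r/(n-1) - 1` and `b = r/(n-1) - n`.
-/

/-- The `g`-trace of a bilinear form `B`: the trace of the endomorphism
`(g♭)⁻¹ ∘ B♭` of `V`, where `B♭ : V → V*` is `X ↦ B(X,·)`. -/
noncomputable def trG {V : Type*} [AddCommGroup V] [Module ℝ V] [FiniteDimensional ℝ V]
    (g : LinearMap.BilinForm ℝ V) (hg : g.Nondegenerate)
    (B : LinearMap.BilinForm ℝ V) : ℝ :=
  LinearMap.trace ℝ V ((g.toDual hg).symm.toLinearMap ∘ₗ B)

section

open LinearMap

variable {V : Type*} [AddCommGroup V] [Module ℝ V] [FiniteDimensional ℝ V]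
  {g : LinearMap.BilinForm ℝ V} (hg : g.Nondegenerate)

theorem trG_add (B C : LinearMap.BilinForm ℝ V) :
    trG g hg (B + C) = trG g hg B + trG g hg C := by
  simp only [trG, comp_add, map_add]

theorem trG_smul (c : ℝ) (B : LinearMap.BilinForm ℝ V) :
    trG g hg (c • B) = c * trG g hg B := by
  simp only [trG, comp_smul, map_smul, smul_eq_mul]

theorem trG_self : trG g hg g = Module.finrank ℝ V := by
  have hid : (g.toDual hg).symm.toLinearMap ∘ₗ g = LinearMap.id := by
    ext X
    exact (g.toDual hg).symm_apply_apply X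
  rw [trG, hid, trace_id]

theorem trG_smulRight (φ ψ : V →ₗ[ℝ] ℝ) :
    trG g hg (φ.smulRight ψ) = φ ((g.toDual hg).symm ψ) := by
  have hrank : (g.toDual hg).symm.toLinearMap ∘ₗ φ.smulRight ψ
      = dualTensorHom ℝ V V (φ ⊗ₜ[ℝ] (g.toDual hg).symm ψ) := by
    ext X
    simp [dualTensorHom_apply]
  rw [trG, hrank, trace_eq_contract_apply, contractLeft_apply]

theorem trG_flip_smulRight_self (P : V) :
    trG g hg ((g.flip P).smulRight (g.flip P)) = g P P := by
  rw [trG_smulRight, BilinForm.flip_apply, BilinForm.apply_toDual_symm_apply,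
    BilinForm.flip_apply]

end

theorem stmt_11_general {V : Type*} [AddCommGroup V] [Module ℝ V] [FiniteDimensional ℝ V]
    (n : ℕ) (hn : 3 ≤ n) (hdim : Module.finrank ℝ V = n)
    (g : LinearMap.BilinForm ℝ V) (hg : g.Nondegenerate)
    (P : V) (hP : g P P = -1) (π : V →ₗ[ℝ] ℝ) (hπ : π = g.flip P)
    (ππ : LinearMap.BilinForm ℝ V) (hππ : ππ = π.smulRight π)
    (Ric : LinearMap.BilinForm ℝ V)
    (hRicP : ∀ X : V, Ric P X = ((n : ℝ) - 1) * π X)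
    (a b : ℝ) (hqE : Ric = a • g + b • ππ) :
    Ric = (trG g hg Ric / ((n : ℝ) - 1) - 1) • g
      + (trG g hg Ric / ((n : ℝ) - 1) - (n : ℝ)) • ππ := by
  have hπP : π P = -1 := by rw [hπ, LinearMap.BilinForm.flip_apply, hP]
  have htrace : trG g hg Ric = a * n - b := by
    rw [hqE, trG_add, trG_smul, trG_smul, trG_self, hdim, hππ, hπ, trG_flip_smulRight_self, hP]
    ring
  have hPP : -a + b = -((n : ℝ) - 1) := by
    have h := hRicP P
    rw [hqE, hππ] at h
    simpa [hP, hπP] using h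
  have hn1 : (n : ℝ) - 1 ≠ 0 := by
    have : (3 : ℝ) ≤ n := by exact_mod_cast hn
    linarith
  have ha : trG g hg Ric / ((n : ℝ) - 1) - 1 = a := by
    rw [htrace]; field_simp; linarith
  have hb : trG g hg Ric / ((n : ℝ) - 1) - n = b := by
    rw [htrace]; field_simp; linear_combination (-(n : ℝ)) * hPP
  rw [ha, hb, hqE]

theorem stmt_11 {V : Type*} [AddCommGroup V] [Module ℝ V] [FiniteDimensional ℝ V]
    (n : ℕ) (hn : 3 ≤ n) (hdim : Module.finrank ℝ V = n)
    (g : LinearMap.BilinForm ℝ V) (hg : g.Nondegenerate) (hgs : g.IsSymm)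
    (P : V) (hP : g P P = -1) (π : V →ₗ[ℝ] ℝ) (hπ : π = g.flip P)
    (ππ : LinearMap.BilinForm ℝ V) (hππ : ππ = π.smulRight π)
    (Ric : LinearMap.BilinForm ℝ V) (hRicSymm : Ric.IsSymm)
    (hRicP : ∀ X : V, Ric P X = ((n : ℝ) - 1) * π X)
    (a b : ℝ) (hqE : Ric = a • g + b • ππ) :
    Ric = (trG g hg Ric / ((n : ℝ) - 1) - 1) • g
      + (trG g hg Ric / ((n : ℝ) - 1) - (n : ℝ)) • ππ :=
  stmt_11_general n hn hdim g hg P hP π hπ ππ hππ Ric hRicP a b hqE
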